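/- Let G be a finite group and let d be a positive integer. Then Σ_{U ≤ G} möb(U, G) · |U|^d, the sum over all subgroups U of G, equals the number of d-tuples (g₁, …, g_d) of elements of G such that {g₁, …, g_d} generates G. In particular, this sum is nonzero if and only if G can be generated by d elements. -/

import Mathlib

open scoped Classical

namespace SubgroupCat

variable {R S T : Type*}

/-- The Möbius function of a finite poset: `pmoeb u i` is `möb(u, i)`. -/
noncomputable def pmoeb {P : Type*} [PartialOrder P] [Finite P] (u i : P) : ℤ :=
  if u = i then 1
  else if u < i then
    - ∑ v ∈ ({v : P | u < v ∧ v ≤ i}.toFinite.toFinset).attach, pmoeb v.1 i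
  else 0
termination_by Nat.card {w : P // u ≤ w}
decreasing_by
  · have hv := v.2
    rw [Set.Finite.mem_toFinset] at hv
    have hlt : u < (v : P) := hv.1
    have hsub : {w : P | (v : P) ≤ w} ⊂ {w : P | u ≤ w} :=
      ⟨fun w hw => le_trans hlt.le hw,
       fun hcon => absurd (hcon (le_refl u)) (by simpa using hlt.not_ge)⟩
    rw [show {w : P // (v : P) ≤ w} = ↑{w : P | (v : P) ≤ w} from rfl,
      show {w : P // u ≤ w} = ↑{w : P | u ≤ w} from rfl,
      Nat.card_coe_set_eq, Nat.card_coe_set_eq]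
    exact Set.ncard_lt_ncard hsub (Set.toFinite _)

/-- `möb(U, I)` for subgroups of a finite group: the Möbius function of the
subgroup lattice. -/
noncomputable def moeb {G : Type*} [Group G] [Finite G] (U I : Subgroup G) : ℤ :=
  pmoeb U I


lemma pmoeb_self {P : Type*} [PartialOrder P] [Finite P] (i : P) : pmoeb i i = 1 := by
  rw [pmoeb]; simp

lemma pmoeb_sum_interval {P : Type*} [PartialOrder P] [Finite P] (u i : P) (h : u ≤ i) :
    ∑ v ∈ ({v : P | u ≤ v ∧ v ≤ i}.toFinite.toFinset), pmoeb v i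
      = if u = i then 1 else 0 := by
  rcases eq_or_lt_of_le h with rfl | hlt
  · rw [if_pos rfl]
    have hset : ({v : P | u ≤ v ∧ v ≤ u}.toFinite.toFinset) = {u} := by
      ext v
      simp only [Set.Finite.mem_toFinset, Set.mem_setOf_eq, Finset.mem_singleton]
      constructor
      · rintro ⟨h1, h2⟩; exact le_antisymm h2 h1
      · rintro rfl; exact ⟨le_refl _, le_refl _⟩
    rw [hset, Finset.sum_singleton, pmoeb_self]
  · rw [if_neg hlt.ne]
    have hsplit : ({v : P | u ≤ v ∧ v ≤ i}.toFinite.toFinset)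
        = insert u ({v : P | u < v ∧ v ≤ i}.toFinite.toFinset) := by
      ext v
      simp only [Set.Finite.mem_toFinset, Set.mem_setOf_eq, Finset.mem_insert]
      constructor
      · rintro ⟨h1, h2⟩
        rcases eq_or_lt_of_le h1 with rfl | h1'
        · exact Or.inl rfl
        · exact Or.inr ⟨h1', h2⟩
      · rintro (rfl | ⟨h1, h2⟩)
        · exact ⟨le_refl _, h⟩
        · exact ⟨h1.le, h2⟩
    have hnot : u ∉ ({v : P | u < v ∧ v ≤ i}.toFinite.toFinset) := by
      simp [Set.Finite.mem_toFinset]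
    rw [hsplit, Finset.sum_insert hnot]
    have hrec : pmoeb u i
        = - ∑ v ∈ ({v : P | u < v ∧ v ≤ i}.toFinite.toFinset), pmoeb v i := by
      rw [pmoeb, if_neg hlt.ne, if_pos hlt,
        Finset.sum_attach _ (fun v => pmoeb v i)]
    rw [hrec]; ring

/-- **Philip Hall.** For a finite group `G` and a positive integer `d`, the sum
`∑_{U ≤ G} möb(U, G) · |U|^d` equals the number of `d`-tuples of elements of `G`
generating `G`; in particular it is nonzero iff `G` can be generated by `d` elements. -/
theorem hall_moebius_count (G : Type*) [Group G] [Finite G] (d : ℕ) (hd : 0 < d) :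
    (∑ᶠ U : Subgroup G, moeb U ⊤ * (Nat.card U : ℤ) ^ d) =
      (Nat.card {v : Fin d → G // Subgroup.closure (Set.range v) = ⊤} : ℤ) ∧
    ((∑ᶠ U : Subgroup G, moeb U ⊤ * (Nat.card U : ℤ) ^ d) ≠ 0 ↔
      ∃ v : Fin d → G, Subgroup.closure (Set.range v) = ⊤) := by
  have hFG : Fintype G := Fintype.ofFinite G
  have hFS : Fintype (Subgroup G) := Fintype.ofFinite _
  set N : Subgroup G → ℕ :=
    fun W => Nat.card {v : Fin d → G // Subgroup.closure (Set.range v) = W} with hN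
  have hcount : ∀ U : Subgroup G,
      (Nat.card U) ^ d = ∑ W ∈ Finset.univ.filter (· ≤ U), N W := by
    intro U
    have e : (Fin d → U) ≃ {v : Fin d → G // Subgroup.closure (Set.range v) ≤ U} :=
      { toFun := fun w => ⟨fun k => (w k : G), by
          rw [Subgroup.closure_le]
          rintro x ⟨k, rfl⟩; exact (w k).2⟩
        invFun := fun v k => ⟨v.1 k, by
          have hv := v.2
          rw [Subgroup.closure_le] at hv
          exact hv (Set.mem_range_self k)⟩
        left_inv := fun w => rfl
        right_inv := fun v => rfl }
    have e1 : (Nat.card U) ^ d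
        = Nat.card {v : Fin d → G // Subgroup.closure (Set.range v) ≤ U} := by
      rw [← Nat.card_congr e, Nat.card_fun]
      simp
    rw [e1]
    have hc1 : Nat.card {v : Fin d → G // Subgroup.closure (Set.range v) ≤ U}
        = (Finset.univ.filter
            (fun v : Fin d → G => Subgroup.closure (Set.range v) ≤ U)).card := by
      rw [Nat.card_eq_fintype_card, Fintype.card_subtype]
    rw [hc1, Finset.card_eq_sum_card_fiberwise
      (f := fun v : Fin d → G => Subgroup.closure (Set.range v))
      (t := Finset.univ.filter (· ≤ U))
      (fun v hv => by
        simp only [Finset.mem_coe, Finset.mem_filter, Finset.mem_univ, true_and] at hv ⊢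
        exact hv)]
    refine Finset.sum_congr rfl fun W hW => ?_
    simp only [Finset.mem_filter, Finset.mem_univ, true_and] at hW
    have : N W = (Finset.univ.filter
        (fun v : Fin d → G => Subgroup.closure (Set.range v) = W)).card := by
      rw [hN]
      simp only [Nat.card_eq_fintype_card, Fintype.card_subtype]
    rw [this]
    congr 1
    ext v
    simp only [Finset.mem_filter, Finset.mem_univ, true_and]
    constructor
    · rintro ⟨-, h2⟩; exact h2
    · rintro rfl; exact ⟨hW, rfl⟩
  have hmoebsum : ∀ W : Subgroup G,
      (∑ U ∈ Finset.univ.filter (W ≤ ·), moeb U ⊤) = if W = ⊤ then 1 else 0 := by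
    intro W
    have hset : (Finset.univ.filter (W ≤ ·))
        = ({v : Subgroup G | W ≤ v ∧ v ≤ ⊤}.toFinite.toFinset) := by
      ext v
      simp [Set.Finite.mem_toFinset, le_top]
    rw [hset]
    exact pmoeb_sum_interval W ⊤ le_top
  have hfin : (∑ᶠ U : Subgroup G, moeb U ⊤ * (Nat.card U : ℤ) ^ d)
      = ∑ U : Subgroup G, moeb U ⊤ * (Nat.card U : ℤ) ^ d := finsum_eq_sum_of_fintype _
  have key : (∑ U : Subgroup G, moeb U ⊤ * (Nat.card U : ℤ) ^ d) = (N ⊤ : ℤ) := by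
    calc ∑ U : Subgroup G, moeb U ⊤ * (Nat.card U : ℤ) ^ d
        = ∑ U : Subgroup G, moeb U ⊤ * ∑ W ∈ Finset.univ.filter (· ≤ U), (N W : ℤ) := by
          refine Finset.sum_congr rfl fun U _ => ?_
          congr 1
          rw [← Nat.cast_pow, hcount U, Nat.cast_sum]
      _ = ∑ U : Subgroup G, ∑ W : Subgroup G,
            (if W ≤ U then moeb U ⊤ * (N W : ℤ) else 0) := by
          refine Finset.sum_congr rfl fun U _ => ?_
          rw [Finset.mul_sum, ← Finset.sum_filter]
      _ = ∑ W : Subgroup G, ∑ U : Subgroup G,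
            (if W ≤ U then moeb U ⊤ * (N W : ℤ) else 0) := Finset.sum_comm
      _ = ∑ W : Subgroup G,
            (∑ U ∈ Finset.univ.filter (W ≤ ·), moeb U ⊤) * (N W : ℤ) := by
          refine Finset.sum_congr rfl fun W _ => ?_
          rw [Finset.sum_filter, Finset.sum_mul]
          refine Finset.sum_congr rfl fun U _ => ?_
          split <;> simp
      _ = ∑ W : Subgroup G, (if W = ⊤ then (1 : ℤ) else 0) * (N W : ℤ) := by
          refine Finset.sum_congr rfl fun W _ => ?_
          rw [hmoebsum W]
      _ = (N ⊤ : ℤ) := by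
          rw [Finset.sum_congr rfl (fun W _ => by rw [ite_mul, one_mul, zero_mul])]
          simp
  have hmain : (∑ᶠ U : Subgroup G, moeb U ⊤ * (Nat.card U : ℤ) ^ d) = (N ⊤ : ℤ) := by
    rw [hfin, key]
  refine ⟨hmain, ?_⟩
  rw [hmain]
  rw [hN]
  constructor
  · intro hne
    have : Nat.card {v : Fin d → G // Subgroup.closure (Set.range v) = ⊤} ≠ 0 := by
      exact_mod_cast hne
    rcases Nat.card_ne_zero.mp this with ⟨⟨v, hv⟩, -⟩
    exact ⟨v, hv⟩
  · rintro ⟨v, hv⟩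
    have : Nat.card {v : Fin d → G // Subgroup.closure (Set.range v) = ⊤} ≠ 0 :=
      Nat.card_ne_zero.mpr ⟨⟨⟨v, hv⟩⟩, inferInstance⟩
    exact_mod_cast this


end SubgroupCat
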